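/- arXiv:2404.18014 — 2 statements merged into one kernel-verified Lean document; each statement's English description precedes it below -/
import Mathlib

section
/- Let G be a finite simple graph and let f be an embedding of G into a layer of the hypercube Q_n (an isomorphism from G onto a subgraph of the k-th layer of Q_n, for some k). Define an edge-labelling χ : E(G) → ℕ by letting χ(xy) be the direction of the edge f(x)f(y), i.e., the unique coordinate in which f(x) and f(y) differ. Then χ is a layered edge-labelling: it is cubical, and for any two edges of G having the same label c, every path in G between these two edges that contains no edge of label c has an even number of edges. -/
open SimpleGraph

/-- The number of ones (`true` coordinates) of a vertex of the hypercube. -/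
def onesCount {n : ℕ} (x : Fin n → Bool) : ℕ := (Finset.univ.filter fun i => x i = true).card

/-- The `n`-dimensional hypercube graph `Q_n`. -/
def cube (n : ℕ) : SimpleGraph (Fin n → Bool) where
  Adj x y := hammingDist x y = 1
  symm := ⟨by intro x y h; rwa [hammingDist_comm]⟩
  loopless := ⟨by intro x h; simp [hammingDist_self] at h⟩

/-- The vertex set of the `k`-th layer of `Q_n`. -/
def layerSet (n k : ℕ) : Set (Fin n → Bool) := {x | onesCount x = k ∨ onesCount x = k + 1}

/-- The `k`-th layer of `Q_n`: the subgraph induced on vertices with `k` or `k+1` ones. -/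
def layer (n k : ℕ) : SimpleGraph (layerSet n k) := (cube n).induce (layerSet n k)

/-- `f` is an isomorphism from `G` onto a subgraph of `H`. -/
def IsEmbedding {V W : Type*} (G : SimpleGraph V) (H : SimpleGraph W) (f : V → W) : Prop :=
  Function.Injective f ∧ ∀ u v, G.Adj u v → H.Adj (f u) (f v)

/-- `f` is an isomorphism from `G` onto an induced subgraph of `H`. -/
def IsInducedEmbedding {V W : Type*} (G : SimpleGraph V) (H : SimpleGraph W) (f : V → W) : Prop :=
  Function.Injective f ∧ ∀ u v, G.Adj u v ↔ H.Adj (f u) (f v)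

/-- `G` is cubical: isomorphic to a subgraph of some hypercube. -/
def IsCubical {V : Type*} (G : SimpleGraph V) : Prop :=
  ∃ (n : ℕ) (f : V → (Fin n → Bool)), IsEmbedding G (cube n) f

/-- `G` is layered: isomorphic to a subgraph of some layer of some hypercube. -/
def IsLayered {V : Type*} (G : SimpleGraph V) : Prop :=
  ∃ (n k : ℕ) (f : V → layerSet n k), IsEmbedding G (layer n k) f

/-- A cubical edge-labelling. -/
def IsCubicalLabelling {V : Type*} (G : SimpleGraph V) (χ : Sym2 V → ℕ) : Prop :=
  (∀ (u : V) (w : G.Walk u u), w.IsCycle → ∀ c : ℕ, Even ((w.edges.map χ).count c)) ∧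
  (∀ (u v : V) (w : G.Walk u v), w.IsPath → 0 < w.length →
      ∃ c : ℕ, Odd ((w.edges.map χ).count c))

/-- A layered edge-labelling. -/
def IsLayeredLabelling {V : Type*} (G : SimpleGraph V) (χ : Sym2 V → ℕ) : Prop :=
  IsCubicalLabelling G χ ∧
  ∀ e₁ ∈ G.edgeSet, ∀ e₂ ∈ G.edgeSet, χ e₁ = χ e₂ →
    ∀ u v, u ∈ e₁ → v ∈ e₂ →
      ∀ (w : G.Walk u v), w.IsPath → (∀ e ∈ w.edges, χ e ≠ χ e₁) → Even w.length

/-- `(G, P)` is `t`-distance-separating. -/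
def DistSeparating {V : Type*} (G : SimpleGraph V) (P : Set (Sym2 V)) (t : ℕ) : Prop :=
  (∃ (n : ℕ) (f : V → (Fin n → Bool)), IsEmbedding G (cube n) f ∧
      ∀ x y : V, s(x, y) ∈ P → hammingDist (f x) (f y) = t) ∧
  (∀ (n k : ℕ) (g : V → layerSet n k), IsEmbedding G (layer n k) g →
      ∃ x y : V, s(x, y) ∈ P ∧ hammingDist (g x).1 (g y).1 = t + 2)

/-!
The label of an edge is the unique coordinate its image flips, so along any walk the number of
edges of label `i` has the parity of the change of the `i`-th coordinate: even around a cycle,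
and, by injectivity, odd for some `i` along a non-trivial path.
Inside the layer `k`, an endpoint `x` of an edge of direction `i` has exactly `k + x i` ones.
A walk avoiding label `i` keeps the `i`-th coordinate, so its ends have the same number of ones;
as every edge of `Q_n` changes the parity of that number, the walk has even length.
-/

section Cube

variable {n k : ℕ} {x y : Fin n → Bool} {i : Fin n}

lemma onesCount_eq_sum_toNat (x : Fin n → Bool) : onesCount x = ∑ j, (x j).toNat := by
  rw [onesCount, Finset.card_filter]
  exact Finset.sum_congr rfl fun j _ => by cases x j <;> rfl

lemma cube_adj_apply_eq (h : (cube n).Adj x y) (hi : x i ≠ y i) {j : Fin n} (hj : j ≠ i) :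
    x j = y j := by
  obtain ⟨a, ha⟩ := Finset.card_eq_one.mp (h : hammingDist x y = 1)
  have hmem : ∀ l, x l ≠ y l → l = a := fun l hl => by
    simpa [ha] using (Finset.ext_iff.mp ha l).mp (by simpa using hl)
  by_contra hne
  exact hj ((hmem j hne).trans (hmem i hi).symm)

lemma onesCount_add_toNat_of_cube_adj (h : (cube n).Adj x y) (hi : x i ≠ y i) :
    onesCount x + (y i).toNat = onesCount y + (x i).toNat := by
  simp only [onesCount_eq_sum_toNat, ← Finset.add_sum_erase _ _ (Finset.mem_univ i)]
  rw [Finset.sum_congr rfl fun j hj => by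
    rw [cube_adj_apply_eq h hi (Finset.ne_of_mem_erase hj)]]
  ring

lemma even_onesCount_ne_of_cube_adj (h : (cube n).Adj x y) :
    Even (onesCount x) ≠ Even (onesCount y) := by
  obtain ⟨i, hi⟩ := Function.ne_iff.mp ((cube n).ne_of_adj h)
  have hcount := onesCount_add_toNat_of_cube_adj h hi
  have hstep : onesCount y = onesCount x + 1 ∨ onesCount x = onesCount y + 1 := by
    cases hx : x i <;> cases hy : y i <;> simp only [hx, hy] at hi hcount <;> simp_all
  rcases hstep with hstep | hstep <;> simp only [hstep, Nat.even_add_one] <;> tauto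

def cubeParityColoring (n : ℕ) : (cube n).Coloring Bool :=
  Coloring.mk (fun x => decide (Even (onesCount x))) fun h => by
    simpa using even_onesCount_ne_of_cube_adj h

@[simp]
lemma cubeParityColoring_apply (x : Fin n → Bool) :
    cubeParityColoring n x = decide (Even (onesCount x)) :=
  rfl

lemma onesCount_eq_of_cube_adj_of_mem_layerSet (hx : x ∈ layerSet n k) (hy : y ∈ layerSet n k)
    (h : (cube n).Adj x y) (hi : x i ≠ y i) : onesCount x = k + (x i).toNat := by
  have hcount := onesCount_add_toNat_of_cube_adj h hi
  simp only [layerSet, Set.mem_ofPred_eq] at hx hy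
  cases hx' : x i <;> cases hy' : y i <;> simp only [hx', hy'] at hi hcount <;>
    simp_all <;> omega

end Cube

section Labelling

variable {V : Type*} {G : SimpleGraph V} {n : ℕ} (φ : G →g cube n) {χ : Sym2 V → ℕ}
  (hχ : ∀ x y : V, G.Adj x y → ∃ i : Fin n, (i : ℕ) = χ s(x, y) ∧ φ x i ≠ φ y i)

include hχ

lemma exists_coord_eq_label {e : Sym2 V} (he : e ∈ G.edgeSet) : ∃ i : Fin n, (i : ℕ) = χ e := by
  induction e using Sym2.ind with
  | _ x y => exact (hχ x y he).imp fun _ => And.left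

lemma label_eq_iff_apply_ne {x y : V} (h : G.Adj x y) (i : Fin n) :
    χ s(x, y) = i ↔ φ x i ≠ φ y i := by
  obtain ⟨j, hj, hne⟩ := hχ x y h
  constructor
  · intro hi
    rwa [Fin.ext (hi.symm.trans hj.symm)]
  · intro hi
    by_contra hij
    exact hi (cube_adj_apply_eq (φ.map_adj h) hne fun h' => hij (h' ▸ hj.symm))

lemma apply_eq_iff_even_count {u v : V} (w : G.Walk u v) (i : Fin n) :
    φ u i = φ v i ↔ Even ((w.edges.map χ).count (i : ℕ)) := by
  induction w with
  | nil => simp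
  | @cons u b v h p ih =>
    rw [Walk.edges_cons, List.map_cons, List.count_cons]
    by_cases hc : χ s(u, b) = i
    · have hflip := (label_eq_iff_apply_ne φ hχ h i).mp hc
      simp only [hc, beq_self_eq_true, if_true, Nat.even_add_one, ← ih]
      cases hu : φ u i <;> cases hb : φ b i <;> cases hv : φ v i <;> simp_all
    · have hkeep := not_not.mp (mt (label_eq_iff_apply_ne φ hχ h i).mpr hc)
      rw [hkeep, ih]
      simp [hc]

lemma isCubicalLabelling_of_injective (hφ : Function.Injective φ) : IsCubicalLabelling G χ := by
  refine ⟨fun u w _ c => ?_, fun u v w hw hlen => ?_⟩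
  · by_cases hc : c ∈ w.edges.map χ
    · obtain ⟨e, he, rfl⟩ := List.mem_map.mp hc
      obtain ⟨i, hi⟩ := exists_coord_eq_label φ hχ (w.edges_subset_edgeSet he)
      rw [← hi]
      exact (apply_eq_iff_even_count φ hχ w i).mp rfl
    · simp [List.count_eq_zero.mpr hc]
  · have huv : u ≠ v := by
      rintro rfl
      exact Walk.not_nil_iff_lt_length.mpr hlen (Walk.isPath_iff_nil.mp hw)
    obtain ⟨i, hi⟩ := Function.ne_iff.mp (hφ.ne huv)
    exact ⟨i, Nat.not_even_iff_odd.mp ((apply_eq_iff_even_count φ hχ w i).not.mp hi)⟩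

lemma onesCount_eq_of_mem_edge {k : ℕ} (hlayer : ∀ v, φ v ∈ layerSet n k) {e : Sym2 V}
    (he : e ∈ G.edgeSet) {u : V} (hu : u ∈ e) {i : Fin n} (hi : (i : ℕ) = χ e) :
    onesCount (φ u) = k + (φ u i).toNat := by
  obtain ⟨a, rfl⟩ := Sym2.mem_iff_exists.mp hu
  exact onesCount_eq_of_cube_adj_of_mem_layerSet (hlayer u) (hlayer a) (φ.map_adj he)
    ((label_eq_iff_apply_ne φ hχ he i).mp hi.symm)

lemma even_length_of_forall_label_ne {k : ℕ} (hlayer : ∀ v, φ v ∈ layerSet n k)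
    {e₁ e₂ : Sym2 V} (he₁ : e₁ ∈ G.edgeSet) (he₂ : e₂ ∈ G.edgeSet) (hχe : χ e₁ = χ e₂)
    {u v : V} (hu : u ∈ e₁) (hv : v ∈ e₂) (w : G.Walk u v) (hw : ∀ e ∈ w.edges, χ e ≠ χ e₁) :
    Even w.length := by
  obtain ⟨i, hi⟩ := exists_coord_eq_label φ hχ he₁
  have hcoord : φ u i = φ v i := by
    rw [apply_eq_iff_even_count φ hχ w i, List.count_eq_zero.mpr fun hmem => ?_]
    · exact Even.zero
    obtain ⟨e, he, hei⟩ := List.mem_map.mp hmem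
    exact hw e he (hei.trans hi)
  rw [Coloring.even_length_iff_congr ((cubeParityColoring n).comp φ) w]
  simp [onesCount_eq_of_mem_edge φ hχ hlayer he₁ hu hi,
    onesCount_eq_of_mem_edge φ hχ hlayer he₂ hv (hi.trans hχe), hcoord]

end Labelling

theorem labelling_of_layer_embedding_isLayered_general {V : Type}
    (G : SimpleGraph V) (n k : ℕ) (f : V → layerSet n k)
    (hf : IsEmbedding G (layer n k) f) (χ : Sym2 V → ℕ)
    (hχ : ∀ x y : V, G.Adj x y →
        ∃ i : Fin n, (i : ℕ) = χ s(x, y) ∧ (f x).1 i ≠ (f y).1 i) :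
    IsLayeredLabelling G χ := by
  let φ : G →g cube n := ⟨fun v => (f v).1, fun h => hf.2 _ _ h⟩
  refine ⟨isCubicalLabelling_of_injective φ hχ (Subtype.val_injective.comp hf.1), ?_⟩
  intro e₁ he₁ e₂ he₂ hχe u v hu hv w _ hw
  exact even_length_of_forall_label_ne φ hχ (fun v => (f v).2) he₁ he₂ hχe hu hv w hw

/-- The edge-labelling induced by an embedding into a layer of a
hypercube, assigning to each edge the direction of its image, is layered. -/
theorem labelling_of_layer_embedding_isLayered {V : Type} [Fintype V]
    (G : SimpleGraph V) (n k : ℕ) (f : V → layerSet n k)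
    (hf : IsEmbedding G (layer n k) f) (χ : Sym2 V → ℕ)
    (hχ : ∀ x y : V, G.Adj x y →
        ∃ i : Fin n, (i : ℕ) = χ s(x, y) ∧ (f x).1 i ≠ (f y).1 i) :
    IsLayeredLabelling G χ :=
  labelling_of_layer_embedding_isLayered_general G n k f hf χ hχ
end

section
/- Let P6 be the path with vertices v0, v1, ..., v6 and edges e_i = v_i v_{i+1} for 0 ≤ i ≤ 5, and let χ : E(P6) → ℕ be any layered edge-labelling of P6. Then there exists some i with 0 ≤ i ≤ 2 such that the four labels χ(e_i), χ(e_{i+1}), χ(e_{i+2}), χ(e_{i+3}) are pairwise distinct. -/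
open SimpleGraph
open Fin.NatCast

/-!
Consecutive edges of a path carry distinct labels (a path of two edges needs a label occurring
an odd number of times), and so do edges at distance two in a layered labelling (the single
middle edge joining them is a path of odd length avoiding their label). Hence in each window of
four consecutive edges only the first and last labels can agree. If this happened in all three
windows of `P6`, its label sequence would be `x y z x y z`, with every label occurring an even
number of times along the whole path, contradicting cubicality.
-/

section

variable {V : Type*} {G : SimpleGraph V} {χ : Sym2 V → ℕ}

theorem IsCubicalLabelling.edges_map_ne_append_self (hχ : IsCubicalLabelling G χ) {u v : V}
    {w : G.Walk u v} (hw : w.IsPath) (hlen : 0 < w.length) (l : List ℕ) :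
    w.edges.map χ ≠ l ++ l := by
  intro h
  obtain ⟨c, hc⟩ := hχ.2 u v w hw hlen
  rw [h, List.count_append] at hc
  exact Nat.not_even_iff_odd.2 hc ⟨_, rfl⟩

theorem IsCubicalLabelling.label_ne_of_adj_adj (hχ : IsCubicalLabelling G χ) {a b c : V}
    (hab : G.Adj a b) (hbc : G.Adj b c) (hac : a ≠ c) : χ s(a, b) ≠ χ s(b, c) := by
  have hw : (Walk.cons hab (Walk.cons hbc Walk.nil)).IsPath := by simp [hab.ne, hbc.ne, hac]
  intro h
  exact hχ.edges_map_ne_append_self hw (by simp) [χ s(a, b)] (by simp [h])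

theorem IsLayeredLabelling.label_ne_of_adj_adj_adj (hχ : IsLayeredLabelling G χ)
    {a b c d : V} (hab : G.Adj a b) (hbc : G.Adj b c) (hcd : G.Adj c d)
    (hne : χ s(a, b) ≠ χ s(b, c)) :
    χ s(a, b) ≠ χ s(c, d) := by
  intro h
  have heven := hχ.2 _ hab _ hcd h b c (by simp) (by simp) (Walk.cons hbc Walk.nil) (by simp [hbc.ne])
    (by simpa using hne.symm)
  simp at heven

theorem IsLayeredLabelling.pairwise_ne_of_first_ne_last (hχ : IsLayeredLabelling G χ)
    {a b c d e : V} (hab : G.Adj a b) (hbc : G.Adj b c) (hcd : G.Adj c d) (hde : G.Adj d e)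
    (hac : a ≠ c) (hbd : b ≠ d) (hce : c ≠ e) (hne : χ s(a, b) ≠ χ s(d, e)) :
    [χ s(a, b), χ s(b, c), χ s(c, d), χ s(d, e)].Pairwise (· ≠ ·) := by
  have n₁ := hχ.1.label_ne_of_adj_adj hab hbc hac
  have n₂ := hχ.1.label_ne_of_adj_adj hbc hcd hbd
  have n₃ := hχ.1.label_ne_of_adj_adj hcd hde hce
  have d₁ := hχ.label_ne_of_adj_adj_adj hab hbc hcd n₁
  have d₂ := hχ.label_ne_of_adj_adj_adj hbc hcd hde n₂
  simp [*]

theorem pathGraph_adj_natCast {n i j : ℕ} [NeZero n] (hij : i + 1 = j) (hj : j < n) :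
    (pathGraph n).Adj i j := by
  rw [pathGraph_adj, Fin.val_natCast, Fin.val_natCast, Nat.mod_eq_of_lt hj,
    Nat.mod_eq_of_lt (by omega)]
  exact Or.inl hij

end

/-- In any layered edge-labelling of `P6` there are four consecutive
edges with pairwise distinct labels. -/
theorem p6_layered_labelling_four_distinct (χ : Sym2 (Fin 7) → ℕ)
    (hχ : IsLayeredLabelling (SimpleGraph.pathGraph 7) χ) :
    ∃ i : ℕ, i ≤ 2 ∧
      [χ s(((i : ℕ) : Fin 7), ((i + 1 : ℕ) : Fin 7)),
       χ s(((i + 1 : ℕ) : Fin 7), ((i + 2 : ℕ) : Fin 7)),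
       χ s(((i + 2 : ℕ) : Fin 7), ((i + 3 : ℕ) : Fin 7)),
       χ s(((i + 3 : ℕ) : Fin 7), ((i + 4 : ℕ) : Fin 7))].Pairwise (· ≠ ·) := by
  have adj (i : ℕ) (hi : i < 6) : (pathGraph 7).Adj (i : Fin 7) ((i + 1 : ℕ) : Fin 7) :=
    pathGraph_adj_natCast rfl (by omega)
  have ne (i j : ℕ) (hj : j < 7) (hij : i < j) : (i : Fin 7) ≠ (j : Fin 7) := by
    simp [Fin.ext_iff, Fin.val_natCast, Nat.mod_eq_of_lt hj, Nat.mod_eq_of_lt (hij.trans hj),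
      hij.ne]
  by_contra! h
  have wrap (i : ℕ) (hi : i ≤ 2) : χ s(((i : ℕ) : Fin 7), ((i + 1 : ℕ) : Fin 7)) =
      χ s(((i + 3 : ℕ) : Fin 7), ((i + 4 : ℕ) : Fin 7)) :=
    not_not.1 fun hne => h i hi <| hχ.pairwise_ne_of_first_ne_last (adj i (by omega))
      (adj (i + 1) (by omega)) (adj (i + 2) (by omega)) (adj (i + 3) (by omega))
      (ne _ _ (by omega) (by omega)) (ne _ _ (by omega) (by omega))
      (ne _ _ (by omega) (by omega)) hne
  have w₀ := wrap 0 (by norm_num)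
  have w₁ := wrap 1 (by norm_num)
  have w₂ := wrap 2 (by norm_num)
  simp only [Nat.cast_zero, Nat.cast_one, Nat.cast_ofNat, Nat.reduceAdd, zero_add] at w₀ w₁ w₂
  let p : (pathGraph 7).Walk 0 6 :=
    .cons (adj 0 (by norm_num)) <| .cons (adj 1 (by norm_num)) <| .cons (adj 2 (by norm_num)) <|
      .cons (adj 3 (by norm_num)) <| .cons (adj 4 (by norm_num)) <| .cons (adj 5 (by norm_num)) .nil
  exact hχ.1.edges_map_ne_append_self (w := p) (by simp [p, Walk.isPath_def]) (by simp [p])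
    [χ s(0, 1), χ s(1, 2), χ s(2, 3)] (by simp [p, w₀, w₁, w₂])
end
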